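/- For natural numbers a, b, c, d with a+b ≥ c+d, a ≥ c, b ≥ d, the sum over k from 0 to a of C(a,k)·C(b,d+k)·C(k,c)·C(d+k,d)·H(k) equals C(a+b-c-d, a)·C(a,c)·C(b,d)·(H(a) - H(a+b-c-d) + H(b-d)), where H is the harmonic number. -/

import Mathlib

/-!
Writing `a = c + A` and `b = d + B`, the factors `C(k, c)` and `C(d + k, d)` are absorbed by
`C(n, k) C(k, s) = C(n, s) C(n - s, k - s)`, which reduces the claim to
`∑ⱼ C(A, j) C(B, c + j) H(c + j) = C(A + B, A + c) (H(A + c) - H(A + B) + H(B))`.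
This follows by induction on `A`: Pascal's rule splits the left side at `A + 1` into the
instances at `(A, c)` and `(A, c + 1)`, and the right side obeys the same recursion because
`(n + 1) C(n, m) = (m + 1) C(n + 1, m + 1)`.
-/

noncomputable def H (m : ℕ) : ℚ := ∑ j ∈ Finset.range m, (1 : ℚ) / (j + 1)

open Finset

lemma H_succ (m : ℕ) : H (m + 1) = H m + 1 / (m + 1) := by
  simp [H, sum_range_succ]

lemma choose_add_mul_choose_add {R : Type*} [Semiring R] (s n k : ℕ) :
    ((s + n).choose (s + k) : R) * (s + k).choose s = (s + n).choose s * n.choose k := by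
  have h := Nat.choose_mul (n := s + n) (k := s + k) (Nat.le_add_right s k)
  rw [Nat.add_sub_cancel_left, Nat.add_sub_cancel_left] at h
  simpa only [Nat.cast_mul] using congrArg (Nat.cast : ℕ → R) h

lemma sum_range_succ_choose_mul {R : Type*} [Semiring R] (A : ℕ) (g : ℕ → R) :
    ∑ j ∈ range (A + 2), ((A + 1).choose j : R) * g j =
      ∑ j ∈ range (A + 1), (A.choose j : R) * (g j + g (j + 1)) := by
  have hshift : ∑ j ∈ range (A + 1), (A.choose j : R) * g j =
      ∑ j ∈ range (A + 1), (A.choose (j + 1) : R) * g (j + 1) + g 0 := by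
    rw [sum_range_succ', sum_range_succ, Nat.choose_succ_self]
    simp
  simp only [mul_add, sum_add_distrib]
  rw [sum_range_succ', hshift]
  simp only [Nat.choose_succ_succ, Nat.cast_add, add_mul, sum_add_distrib,
    Nat.choose_zero_right, Nat.cast_one, one_mul]
  abel

lemma choose_succ_succ_mul_H (n m : ℕ) (x : ℚ) :
    ((n + 1).choose (m + 1) : ℚ) * (H (m + 1) - H (n + 1) + x) =
      n.choose m * (H m - H n + x) + n.choose (m + 1) * (H (m + 1) - H n + x) := by
  have hpascal : ((n + 1).choose (m + 1) : ℚ) = n.choose m + n.choose (m + 1) := by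
    exact_mod_cast Nat.choose_succ_succ n m
  have habsorb : ((n + 1) * n.choose m : ℚ) = (n + 1).choose (m + 1) * (m + 1) := by
    exact_mod_cast Nat.add_one_mul_choose_eq n m
  have hratio : (n.choose m : ℚ) / (m + 1) = (n + 1).choose (m + 1) / (n + 1) := by
    rw [div_eq_div_iff (by positivity) (by positivity)]
    linear_combination habsorb
  rw [H_succ, H_succ]
  linear_combination (H m - H n + x + 1 / (m + 1)) * hpascal + hratio

lemma sum_choose_mul_choose_add_mul_H (A B c : ℕ) :
    ∑ j ∈ range (A + 1), (A.choose j : ℚ) * (B.choose (c + j) * H (c + j)) =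
      (A + B).choose (A + c) * (H (A + c) - H (A + B) + H B) := by
  induction A generalizing c with
  | zero => simp
  | succ A ih =>
    have ih' := ih (c + 1)
    simp only [add_right_comm c 1, ← add_assoc] at ih'
    calc _ = ∑ j ∈ range (A + 1), (A.choose j : ℚ) * (B.choose (c + j) * H (c + j)) +
          ∑ j ∈ range (A + 1), (A.choose j : ℚ) * (B.choose (c + j + 1) * H (c + j + 1)) := by
          rw [sum_range_succ_choose_mul, ← sum_add_distrib]
          simp only [mul_add, add_assoc]
      _ = _ := by
          rw [ih c, ih', add_right_comm A 1 B, add_right_comm A 1 c, choose_succ_succ_mul_H]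

theorem stmt_14_general (a b c d : ℕ) (h2 : a ≥ c) (h3 : b ≥ d) :
    ∑ k ∈ Finset.range (a + 1),
      (a.choose k : ℚ) * b.choose (d + k) * k.choose c * (d + k).choose d * H k =
    ((a + b - c - d).choose a : ℚ) * a.choose c * b.choose d *
      (H a - H (a + b - c - d) + H (b - d)) := by
  obtain ⟨A, rfl⟩ := Nat.exists_eq_add_of_le h2
  obtain ⟨B, rfl⟩ := Nat.exists_eq_add_of_le h3
  have hterm : ∀ j, ((c + A).choose (c + j) : ℚ) * (d + B).choose (d + (c + j)) *
      (c + j).choose c * (d + (c + j)).choose d * H (c + j) =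
      (c + A).choose c * (d + B).choose d * (A.choose j * (B.choose (c + j) * H (c + j))) := by
    intro j
    calc _ = ((c + A).choose (c + j) * (c + j).choose c : ℚ) *
          ((d + B).choose (d + (c + j)) * (d + (c + j)).choose d) * H (c + j) := by ring
      _ = _ := by rw [choose_add_mul_choose_add, choose_add_mul_choose_add]; ring
  have hvanish : ∀ k ∈ range c, ((c + A).choose k : ℚ) * (d + B).choose (d + k) *
      k.choose c * (d + k).choose d * H k = 0 := fun k hk => by
    simp [Nat.choose_eq_zero_of_lt (mem_range.1 hk)]
  rw [add_assoc, sum_range_add, sum_eq_zero hvanish, zero_add]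
  simp only [hterm, ← mul_sum, sum_choose_mul_choose_add_mul_H]
  rw [show c + A + (d + B) - c - d = A + B by omega, Nat.add_sub_cancel_left, add_comm A c]
  ring

theorem stmt_14 (a b c d : ℕ) (h1 : a + b ≥ c + d) (h2 : a ≥ c) (h3 : b ≥ d) :
    ∑ k ∈ Finset.range (a + 1),
      (a.choose k : ℚ) * b.choose (d + k) * k.choose c * (d + k).choose d * H k =
    ((a + b - c - d).choose a : ℚ) * a.choose c * b.choose d *
      (H a - H (a + b - c - d) + H (b - d)) :=
  stmt_14_general a b c d h2 h3
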